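/- arXiv:1711.08656 — 3 statements merged into one kernel-verified Lean document; each statement's English description precedes it below -/
import Mathlib

section
/- Let κ be a cardinal, X a κ-collectionwise normal topological space, and F ⊆ X an F_σ-set (a countable union of closed sets). Then F, with the subspace topology, is κ-collectionwise normal. -/
open Set Topology Cardinal

universe u v

/-- The equivalence relation on `[0,1] × I` identifying all points with first coordinate `0`. -/
def hedgehogSetoid (I : Type u) : Setoid (Set.Icc (0:ℝ) 1 × I) where
  r p q := ((p.1 : ℝ) = 0 ∧ (q.1 : ℝ) = 0) ∨ p = q
  iseqv := by
    refine ⟨fun p => Or.inr rfl, ?_, ?_⟩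
    · rintro p q (⟨h1, h2⟩ | rfl)
      · exact Or.inl ⟨h2, h1⟩
      · exact Or.inr rfl
    · rintro p q r (⟨h1, h2⟩ | rfl) hqr
      · rcases hqr with ⟨h3, h4⟩ | rfl
        · exact Or.inl ⟨h1, h4⟩
        · exact Or.inl ⟨h1, h2⟩
      · exact hqr

/-- The hedgehog with spines indexed by `I`, as a set (quotient of `[0,1] × I`). -/
abbrev Hedgehog (I : Type u) := Quotient (hedgehogSetoid I)

/-- The product topology on `[0,1] × I`, where `[0,1]` carries the usual topology and
`I` carries the discrete topology. -/
def hedgehogBaseTop (I : Type u) : TopologicalSpace (Set.Icc (0:ℝ) 1 × I) :=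
  @instTopologicalSpaceProd _ _ inferInstance ⊥

/-- The quotient topology on the hedgehog: the quotient hedgehog `J(κ)`. -/
def quotHedgehogTop (I : Type u) : TopologicalSpace (Hedgehog I) :=
  TopologicalSpace.coinduced (Quotient.mk (hedgehogSetoid I)) (hedgehogBaseTop I)

/-- The projection `π_κ : J(κ) → [0,1]`, sending `(t, j)` to `t`. -/
def hedgehogPiKappa {I : Type u} : Hedgehog I → Set.Icc (0:ℝ) 1 :=
  Quotient.lift Prod.fst (by
    rintro p q (⟨h1, h2⟩ | rfl)
    · exact Subtype.ext (h1.trans h2.symm)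
    · rfl)

open Classical in
/-- The projection `π_i : J(κ) → [0,1]`, sending `(t, j)` to `t` if `j = i` and to `0`
otherwise. -/
noncomputable def hedgehogProj {I : Type u} (i : I) : Hedgehog I → Set.Icc (0:ℝ) 1 :=
  Quotient.lift (fun p => if p.2 = i then p.1 else ⟨0, by norm_num⟩) (by
    rintro p q (⟨h1, h2⟩ | rfl)
    · have hp : p.1 = (⟨0, by norm_num⟩ : Set.Icc (0:ℝ) 1) := Subtype.ext h1
      have hq : q.1 = (⟨0, by norm_num⟩ : Set.Icc (0:ℝ) 1) := Subtype.ext h2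
      try dsimp only
      split_ifs <;> simp [hp, hq]
    · rfl)

open Classical in
/-- The hedgehog metric: `d((t,i),(s,j)) = |t - s|` if `i = j` and `t + s` otherwise.
(It is defined via representatives; the formula does not depend on the choice of
representatives.) -/
noncomputable def hedgehogDist {I : Type u} (x y : Hedgehog I) : ℝ :=
  if x.out.2 = y.out.2 then |(x.out.1 : ℝ) - (y.out.1 : ℝ)|
  else (x.out.1 : ℝ) + (y.out.1 : ℝ)

/-- The metric hedgehog `MJ(κ)`: the hedgehog equipped with the hedgehog metric. -/
noncomputable def metricHedgehog (I : Type u) : MetricSpace (Hedgehog I) where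
  dist := hedgehogDist
  dist_self := by
    intro x
    show hedgehogDist x x = 0
    unfold hedgehogDist
    rw [if_pos rfl, sub_self, abs_zero]
  dist_comm := by
    intro x y
    show hedgehogDist x y = hedgehogDist y x
    unfold hedgehogDist
    rcases eq_or_ne x.out.2 y.out.2 with h | h
    · rw [if_pos h, if_pos h.symm, abs_sub_comm]
    · rw [if_neg h, if_neg (Ne.symm h), add_comm]
  dist_triangle := by
    intro x y z
    show hedgehogDist x z ≤ hedgehogDist x y + hedgehogDist y z
    unfold hedgehogDist
    have hx0 : (0:ℝ) ≤ x.out.1 := x.out.1.2.1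
    have hy0 : (0:ℝ) ≤ y.out.1 := y.out.1.2.1
    have hz0 : (0:ℝ) ≤ z.out.1 := z.out.1.2.1
    have hxy : |(x.out.1:ℝ) - y.out.1| ≤ (x.out.1:ℝ) + y.out.1 :=
      abs_le.mpr ⟨by linarith, by linarith⟩
    have hyz : |(y.out.1:ℝ) - z.out.1| ≤ (y.out.1:ℝ) + z.out.1 :=
      abs_le.mpr ⟨by linarith, by linarith⟩
    have hxz : |(x.out.1:ℝ) - z.out.1| ≤ (x.out.1:ℝ) + z.out.1 :=
      abs_le.mpr ⟨by linarith, by linarith⟩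
    have htri := abs_sub_le (x.out.1:ℝ) (y.out.1:ℝ) (z.out.1:ℝ)
    have h1 := le_abs_self ((x.out.1:ℝ) - y.out.1)
    have h2 := neg_abs_le ((x.out.1:ℝ) - y.out.1)
    have h3 := le_abs_self ((y.out.1:ℝ) - z.out.1)
    have h4 := neg_abs_le ((y.out.1:ℝ) - z.out.1)
    split_ifs <;> try linarith
    all_goals simp_all
  eq_of_dist_eq_zero := by
    intro x y h
    replace h : hedgehogDist x y = 0 := h
    unfold hedgehogDist at h
    have hx0 : (0:ℝ) ≤ x.out.1 := x.out.1.2.1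
    have hy0 : (0:ℝ) ≤ y.out.1 := y.out.1.2.1
    rw [← Quotient.out_eq x, ← Quotient.out_eq y]
    split_ifs at h with hc
    · have h1 : (x.out.1:ℝ) = y.out.1 := by
        have := abs_eq_zero.mp h
        linarith
      have : x.out = y.out := Prod.ext (Subtype.ext h1) hc
      rw [this]
    · exact Quotient.sound (Or.inl ⟨by linarith, by linarith⟩)

/-- The topology of the metric hedgehog `MJ(κ)`. -/
noncomputable def metricHedgehogTop (I : Type u) : TopologicalSpace (Hedgehog I) :=
  (metricHedgehog I).toUniformSpace.toTopologicalSpace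

/-- The bijection `Φ` from the hedgehog onto the axes `L(κ)` of the cube `[0,1]^I`,
viewed as a map into the cube: `Φ(t,i)(j) = t` if `j = i` and `0` otherwise. -/
noncomputable def hedgehogPhi {I : Type u} : Hedgehog I → (I → Set.Icc (0:ℝ) 1) :=
  fun x j => hedgehogProj j x

/-- The topology of the compact hedgehog `ΛJ(κ)`: the topology transported along `Φ`
from the subspace `L(κ)` of the Tychonoff cube `[0,1]^I`, i.e. the topology induced by `Φ`
from the product topology. -/
noncomputable def compactHedgehogTop (I : Type u) : TopologicalSpace (Hedgehog I) :=
  TopologicalSpace.induced hedgehogPhi inferInstance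

/-- The weight of a topological space: the minimum cardinality of a basis of its topology. -/
noncomputable def weight (X : Type u) [TopologicalSpace X] : Cardinal.{u} :=
  sInf { c : Cardinal.{u} | ∃ B : Set (Set X), TopologicalSpace.IsTopologicalBasis B ∧ #B = c }

/-- A family `A` of subsets of a topological space is discrete if every point has a
neighborhood meeting `A i` for at most one index `i`. -/
def IsDiscreteFamily {X : Type*} [TopologicalSpace X] {ι : Type*} (A : ι → Set X) : Prop :=
  ∀ x : X, ∃ N ∈ nhds x, { i | (A i ∩ N).Nonempty }.Subsingleton

/-- A set-indexed family of subsets of a topological space is discrete if every point has a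
neighborhood meeting at most one member of the family. -/
def IsDiscreteSetFamily {X : Type*} [TopologicalSpace X] (𝒜 : Set (Set X)) : Prop :=
  ∀ x : X, ∃ N ∈ nhds x, { A ∈ 𝒜 | (A ∩ N).Nonempty }.Subsingleton

/-- A topological space `X` is `κ`-collectionwise normal if every discrete family of closed
sets indexed by a set of cardinality `κ` can be separated by a pairwise disjoint family of
open sets. -/
def IsCollectionwiseNormalWrt (κ : Cardinal.{u}) (X : Type v) [TopologicalSpace X] : Prop :=
  ∀ (ι : Type u) (F : ι → Set X), #ι = κ → (∀ i, IsClosed (F i)) → IsDiscreteFamily F →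
    ∃ U : ι → Set X, (∀ i, IsOpen (U i)) ∧ (Pairwise fun i j => Disjoint (U i) (U j)) ∧
      ∀ i, F i ⊆ U i

/-- A topological space is completely metrizable if its topology is induced by some
complete metric. -/
def IsCompletelyMetrizable (X : Type*) [t : TopologicalSpace X] : Prop :=
  ∃ m : MetricSpace X, m.toUniformSpace.toTopologicalSpace = t ∧
    @CompleteSpace X m.toUniformSpace

/- In a κ-collectionwise normal space with κ ≥ 2 (hence normal), write F = ⋃ Cₙ with Cₙ closed.
A discrete closed family {Fᵢ} of F meets each Cₙ in a discrete family of sets closed in X, which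
is separated by disjoint open sets. Using normality these are shrunk to open Vₙᵢ ⊇ Fᵢ ∩ Cₙ such
that Fᵢ misses the closure of ⋃_{j ≠ i} Vₙⱼ, and then the sets
Uᵢ = ⋃ₙ (Vₙᵢ \ ⋃_{m ≤ n} closure (⋃_{j ≠ i} Vₘⱼ)) are disjoint open neighbourhoods of the Fᵢ. -/

section DiscreteFamily

variable {X : Type*} [TopologicalSpace X] {ι : Type*} {G : ι → Set X}

theorem IsDiscreteFamily.locallyFinite (hG : IsDiscreteFamily G) : LocallyFinite G :=
  fun x => (hG x).imp fun _ ⟨hN, hsub⟩ => ⟨hN, hsub.finite⟩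

theorem IsDiscreteFamily.pairwise_disjoint (hG : IsDiscreteFamily G) :
    Pairwise fun i j => Disjoint (G i) (G j) := by
  intro i j hij
  refine disjoint_left.mpr fun x hxi hxj => hij ?_
  obtain ⟨N, hN, hsub⟩ := hG x
  exact hsub ⟨x, hxi, mem_of_mem_nhds hN⟩ ⟨x, hxj, mem_of_mem_nhds hN⟩

theorem IsDiscreteFamily.isClosed_biUnion (hG : IsDiscreteFamily G) (hc : ∀ i, IsClosed (G i))
    (p : ι → Prop) : IsClosed (⋃ (i) (_ : p i), G i) :=
  (hG.locallyFinite.subset fun _ => iUnion_subset fun _ => subset_rfl).isClosed_iUnion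
    fun i => by by_cases hi : p i <;> simp [hi, hc i]

theorem LocallyFinite.isDiscreteFamily (hf : LocallyFinite G) (hc : ∀ i, IsClosed (G i))
    (hd : Pairwise fun i j => Disjoint (G i) (G j)) : IsDiscreteFamily G := by
  intro x
  refine ⟨_, hf.iInter_compl_mem_nhds hc x, fun i ⟨_, hyi, hy⟩ j ⟨_, hzj, hz⟩ => ?_⟩
  have hxi : x ∈ G i := by_contra fun h => (mem_iInter₂.mp hy i h) hyi
  have hxj : x ∈ G j := by_contra fun h => (mem_iInter₂.mp hz j h) hzj
  by_contra hij
  exact disjoint_left.mp (hd hij) hxi hxj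

end DiscreteFamily

theorem normalSpace_of_isCollectionwiseNormalWrt {X : Type v} [TopologicalSpace X] {ι : Type u}
    (hX : IsCollectionwiseNormalWrt #ι X) {i₀ i₁ : ι} (hne : i₀ ≠ i₁) : NormalSpace X := by
  classical
  refine ⟨fun A B hA hB hAB => ?_⟩
  let G : ι → Set X := fun i => if i = i₀ then A else if i = i₁ then B else ∅
  have hGc : ∀ i, IsClosed (G i) := fun i => by
    simp only [G]; split_ifs <;> simp [hA, hB]
  have hGf : LocallyFinite G := fun _ => ⟨univ, Filter.univ_mem,
    ({i₀, i₁} : Set ι).toFinite.subset fun i ⟨_, hy, _⟩ => by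
      simp only [G] at hy; split_ifs at hy <;> simp_all⟩
  have hGd : Pairwise fun i j => Disjoint (G i) (G j) := fun i j hij => by
    simp only [G]; split_ifs <;> simp_all [hAB.symm]
  obtain ⟨U, hUo, hUd, hGU⟩ := hX ι G rfl hGc (hGf.isDiscreteFamily hGc hGd)
  exact ⟨U i₀, U i₁, hUo i₀, hUo i₁, by simpa [G] using hGU i₀,
    by simpa [G, hne.symm] using hGU i₁, hUd hne⟩

section Subspace

variable {X : Type*} [TopologicalSpace X] {F D : Set X}

theorem IsClosed.closure_image_val_inter_subset {s : Set F} (hs : IsClosed s) :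
    closure (Subtype.val '' s) ∩ F ⊆ Subtype.val '' s := by
  rintro x ⟨hx, hxF⟩
  refine ⟨⟨x, hxF⟩, ?_, rfl⟩
  rw [← hs.closure_eq, IsEmbedding.subtypeVal.closure_eq_preimage_closure_image]
  exact hx

theorem IsClosed.isClosed_image_val_inter {s : Set F} (hs : IsClosed s) (hD : IsClosed D)
    (hDF : D ⊆ F) : IsClosed (Subtype.val '' s ∩ D) := by
  refine isClosed_of_closure_subset fun x hx => ?_
  have hxD : x ∈ D := hD.closure_subset (closure_mono inter_subset_right hx)
  exact ⟨hs.closure_image_val_inter_subset ⟨closure_mono inter_subset_left hx, hDF hxD⟩, hxD⟩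

theorem IsClosed.disjoint_image_val_closure {s t : Set F} (ht : IsClosed t) (h : Disjoint s t) :
    Disjoint (Subtype.val '' s) (closure (Subtype.val '' t)) := by
  rw [disjoint_left]
  rintro _ ⟨x, hxs, rfl⟩ hx
  obtain ⟨y, hyt, hyx⟩ := ht.closure_image_val_inter_subset ⟨hx, x.2⟩
  exact disjoint_left.mp h hxs (Subtype.val_injective hyx ▸ hyt)

variable {ι : Type*} {G : ι → Set F}

theorem IsDiscreteFamily.image_val_inter (hG : IsDiscreteFamily G) (hD : IsClosed D)
    (hDF : D ⊆ F) : IsDiscreteFamily fun i => Subtype.val '' G i ∩ D := by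
  intro x
  by_cases hx : x ∈ D
  · obtain ⟨N, hN, hsub⟩ := hG ⟨x, hDF hx⟩
    obtain ⟨O, hO, hON⟩ := (mem_nhds_subtype F _ N).mp hN
    have hmeet : ∀ i, (Subtype.val '' G i ∩ D ∩ O).Nonempty → (G i ∩ N).Nonempty := by
      rintro i ⟨_, ⟨⟨y, hy, rfl⟩, -⟩, hyO⟩
      exact ⟨y, hy, hON hyO⟩
    exact ⟨O, hO, fun i hi j hj => hsub (hmeet i hi) (hmeet j hj)⟩
  · exact ⟨Dᶜ, hD.isOpen_compl.mem_nhds hx, fun _ ⟨_, ⟨_, hyD⟩, hyD'⟩ => (hyD' hyD).elim⟩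

theorem IsDiscreteFamily.disjoint_image_val_closure_biUnion (hG : IsDiscreteFamily G)
    (hc : ∀ i, IsClosed (G i)) (i : ι) :
    Disjoint (Subtype.val '' G i) (closure (⋃ j ≠ i, Subtype.val '' G j)) := by
  simp_rw [← image_iUnion₂]
  exact (hG.isClosed_biUnion hc _).disjoint_image_val_closure
    (disjoint_iUnion₂_right.mpr fun _ hj => hG.pairwise_disjoint (Ne.symm hj))

end Subspace

section Separation

variable {X : Type*} [TopologicalSpace X] {ι : Type*}

theorem exists_open_disjoint_closure_biUnion_ne [NormalSpace X] {A V : ι → Set X} {D : Set X}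
    (hD : IsClosed D) (hsep : ∀ i, Disjoint (A i) (closure (⋃ j ≠ i, A j)))
    (hcl : closure (⋃ i, A i) ∩ D ⊆ ⋃ i, A i) (hVo : ∀ i, IsOpen (V i))
    (hVd : Pairwise fun i j => Disjoint (V i) (V j)) (hAV : ∀ i, A i ∩ D ⊆ V i) :
    ∃ W : ι → Set X, (∀ i, IsOpen (W i)) ∧ (∀ i, A i ∩ D ⊆ W i) ∧
      ∀ i, Disjoint (A i) (closure (⋃ j ≠ i, W j)) := by
  set E : ι → Set X := fun i => closure (⋃ j ≠ i, A j)
  have hVEo : ∀ i, IsOpen (V i \ E i) := fun i => (hVo i).sdiff isClosed_closure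
  have hAVE : ∀ i, A i ∩ D ⊆ V i \ E i := fun i x hx => ⟨hAV i hx, disjoint_left.mp (hsep i) hx.1⟩
  obtain ⟨O, hOo, hAO, hOV⟩ := normal_exists_closure_subset (isClosed_closure.inter hD)
    (isOpen_iUnion hVEo) fun x hx => by
      obtain ⟨k, hxk⟩ := mem_iUnion.mp (hcl hx)
      exact mem_iUnion.mpr ⟨k, hAVE k ⟨hxk, hx.2⟩⟩
  refine ⟨fun i => (V i \ E i) ∩ O, fun i => (hVEo i).inter hOo,
    fun i x hx => ⟨hAVE i hx, hAO ⟨subset_closure (mem_iUnion_of_mem i hx.1), hx.2⟩⟩, ?_⟩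
  intro i
  refine disjoint_left.mpr fun x hxA hx => ?_
  -- `x ∈ V k \ E k` for some `k`; `A i ⊆ E k` rules out `k ≠ i`, and `V i` is open and disjoint
  -- from every `W j` with `j ≠ i`
  obtain ⟨k, hxk⟩ := mem_iUnion.mp
    (hOV (closure_mono (iUnion₂_subset fun _ _ => inter_subset_right) hx))
  obtain rfl | hki := eq_or_ne k i
  · have hdisj : Disjoint (V k \ E k) (⋃ j ≠ k, (V j \ E j) ∩ O) := disjoint_iUnion₂_right.mpr
      fun _ hj => (hVd (Ne.symm hj)).mono sdiff_subset (inter_subset_left.trans sdiff_subset)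
    exact disjoint_left.mp (hdisj.closure_right (hVEo k)) hxk hx
  · exact hxk.2 (subset_closure (mem_iUnion₂.mpr ⟨i, hki.symm, hxA⟩))

theorem exists_pairwise_disjoint_open_of_closure_biUnion_ne {A : ι → Set X} {V : ℕ → ι → Set X}
    (hVo : ∀ n i, IsOpen (V n i)) (hAV : ∀ i, A i ⊆ ⋃ n, V n i)
    (hsep : ∀ n i, Disjoint (A i) (closure (⋃ j ≠ i, V n j))) :
    ∃ U : ι → Set X, (∀ i, IsOpen (U i)) ∧ (Pairwise fun i j => Disjoint (U i) (U j)) ∧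
      ∀ i, A i ⊆ U i := by
  let R : ℕ → ι → Set X := fun n i => ⋃ m ∈ Iic n, closure (⋃ j ≠ i, V m j)
  refine ⟨fun i => ⋃ n, V n i \ R n i, fun i => isOpen_iUnion fun n =>
    (hVo n i).sdiff ((finite_Iic n).isClosed_biUnion fun _ _ => isClosed_closure), ?_, ?_⟩
  · intro i j hij
    refine disjoint_left.mpr fun x hxi hxj => ?_
    obtain ⟨n, hxn, hxRn⟩ := mem_iUnion.mp hxi
    obtain ⟨n', hxn', hxRn'⟩ := mem_iUnion.mp hxj
    rcases le_total n n' with h | h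
    · exact hxRn' (mem_biUnion h (subset_closure (mem_iUnion₂.mpr ⟨i, hij, hxn⟩)))
    · exact hxRn (mem_biUnion h (subset_closure (mem_iUnion₂.mpr ⟨j, hij.symm, hxn'⟩)))
  · intro i x hx
    obtain ⟨n, hxn⟩ := mem_iUnion.mp (hAV i hx)
    refine mem_iUnion.mpr ⟨n, hxn, fun hxR => ?_⟩
    obtain ⟨m, -, hxm⟩ := mem_iUnion₂.mp hxR
    exact disjoint_left.mp (hsep m i) hx hxm

end Separation

/-- `κ`-collectionwise normality is hereditary with respect to `F_σ`-sets. -/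
theorem collectionwiseNormal_of_Fsigma (κ : Cardinal.{u}) (X : Type v) [TopologicalSpace X]
    (hX : IsCollectionwiseNormalWrt κ X) (F : Set X)
    (hF : ∃ C : ℕ → Set X, (∀ n, IsClosed (C n)) ∧ F = ⋃ n, C n) :
    IsCollectionwiseNormalWrt κ F := by
  obtain ⟨C, hC, rfl⟩ := hF
  intro ι G hι hGc hGd
  rcases subsingleton_or_nontrivial ι with _ | _
  · exact ⟨fun _ => univ, fun _ => isOpen_univ, fun i j hij => (hij (Subsingleton.elim i j)).elim,
      fun _ => subset_univ _⟩
  obtain ⟨i₀, i₁, hne⟩ := exists_pair_ne ι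
  have : NormalSpace X := normalSpace_of_isCollectionwiseNormalWrt (hι ▸ hX) hne
  have hV : ∀ n, ∃ V : ι → Set X, (∀ i, IsOpen (V i)) ∧ (∀ i, Subtype.val '' G i ∩ C n ⊆ V i) ∧
      ∀ i, Disjoint (Subtype.val '' G i) (closure (⋃ j ≠ i, V j)) := fun n => by
    have hCn := subset_iUnion C n
    obtain ⟨V, hVo, hVd, hGV⟩ := hX ι _ hι (fun i => (hGc i).isClosed_image_val_inter (hC n) hCn)
      (hGd.image_val_inter (hC n) hCn)
    have hcl : closure (⋃ i, Subtype.val '' G i) ∩ C n ⊆ ⋃ i, Subtype.val '' G i := by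
      rw [← image_iUnion]
      exact fun x hx => (hGd.locallyFinite.isClosed_iUnion hGc).closure_image_val_inter_subset
        ⟨hx.1, hCn hx.2⟩
    exact exists_open_disjoint_closure_biUnion_ne (hC n)
      (hGd.disjoint_image_val_closure_biUnion hGc) hcl hVo hVd hGV
  choose V hVo hGV hVsep using hV
  have hGcover : ∀ i, Subtype.val '' G i ⊆ ⋃ n, V n i := by
    rintro i _ ⟨x, hx, rfl⟩
    obtain ⟨n, hxn⟩ := mem_iUnion.mp x.2
    exact mem_iUnion.mpr ⟨n, hGV n i ⟨⟨x, hx, rfl⟩, hxn⟩⟩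
  obtain ⟨U, hUo, hUd, hGU⟩ := exists_pairwise_disjoint_open_of_closure_biUnion_ne hVo hGcover hVsep
  exact ⟨fun i => Subtype.val ⁻¹' U i, fun i => (hUo i).preimage continuous_subtype_val,
    fun i j hij => (hUd hij).preimage _, fun i => image_subset_iff.mp (hGU i)⟩
end

section
/- The real line ℝ with its usual topology embeds as a closed subspace of the square (MJ(ℵ₀))² of the metric hedgehog with countably many spines (with the product topology); i.e., there is a topological embedding h : ℝ → (MJ(ℵ₀))² whose image is closed. -/
open Set Topology Cardinal

universe u v

/-!
Cut `ℝ` into the blocks `[4m, 4m + 4]`. The first coordinate of `h x` is the point at height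
`tent x = min (x - 4m, 4m + 4 - x, 1)` on the `m`-th spine, where `m` is the block of `x`: the
spine is walked out to its tip, the tip is held, and the walk returns to the centre. The second
coordinate does the same with the blocks shifted by `2`. Both coordinates are `1`-Lipschitz.
Because the two block systems are staggered, `tent x + tent (x - 2) ≥ 1`, and on each half-block
`tent x - tent (x - 2)` is `x` up to sign and translation; a case analysis on whether `x` and `y`
share their blocks then gives `min |x - y| 1 ≤ 2 d(h x, h y)`. So `h` is a uniform embedding of
the complete space `ℝ`, hence a closed embedding.
-/

namespace Hedgehog

variable {I : Type*}

noncomputable local instance : MetricSpace (Hedgehog I) := metricHedgehog I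

open Classical in
private noncomputable def repDist (p q : Icc (0:ℝ) 1 × I) : ℝ :=
  if p.2 = q.2 then |(p.1 : ℝ) - q.1| else p.1 + q.1

private lemma repDist_comm (p q : Icc (0:ℝ) 1 × I) : repDist p q = repDist q p := by
  unfold repDist
  rcases eq_or_ne p.2 q.2 with h | h
  · rw [if_pos h, if_pos h.symm, abs_sub_comm]
  · rw [if_neg h, if_neg (Ne.symm h), add_comm]

private lemma repDist_congr_left {p p' : Icc (0:ℝ) 1 × I} (h : hedgehogSetoid I p p')
    (q : Icc (0:ℝ) 1 × I) : repDist p q = repDist p' q := by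
  rcases h with ⟨hp, hp'⟩ | rfl
  · have hq : (0:ℝ) ≤ q.1 := q.1.2.1
    unfold repDist
    split_ifs <;> simp [hp, hp', abs_of_nonneg hq]
  · rfl

private lemma dist_mk_mk (p q : Icc (0:ℝ) 1 × I) :
    dist (⟦p⟧ : Hedgehog I) ⟦q⟧ = repDist p q := by
  change repDist ⟦p⟧.out ⟦q⟧.out = _
  rw [repDist_congr_left (Quotient.mk_out p), repDist_comm,
    repDist_congr_left (Quotient.mk_out q), repDist_comm]

noncomputable def spinePoint (i : I) (t : ℝ) : Hedgehog I := ⟦(projIcc 0 1 zero_le_one t, i)⟧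

lemma dist_spinePoint_same (i : I) {t s : ℝ} (ht : t ∈ Icc (0:ℝ) 1) (hs : s ∈ Icc (0:ℝ) 1) :
    dist (spinePoint i t) (spinePoint i s) = |t - s| := by
  rw [spinePoint, spinePoint, dist_mk_mk, repDist, if_pos rfl, projIcc_of_mem _ ht,
    projIcc_of_mem _ hs]

lemma dist_spinePoint_of_ne {i j : I} (hij : i ≠ j) {t s : ℝ} (ht : t ∈ Icc (0:ℝ) 1)
    (hs : s ∈ Icc (0:ℝ) 1) : dist (spinePoint i t) (spinePoint j s) = t + s := by
  rw [spinePoint, spinePoint, dist_mk_mk, repDist, if_neg hij, projIcc_of_mem _ ht,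
    projIcc_of_mem _ hs]

lemma dist_spinePoint_le_add (i j : I) {t s : ℝ} (ht : t ∈ Icc (0:ℝ) 1)
    (hs : s ∈ Icc (0:ℝ) 1) : dist (spinePoint i t) (spinePoint j s) ≤ t + s := by
  rcases eq_or_ne i j with rfl | hij
  · rw [dist_spinePoint_same i ht hs]
    exact abs_sub_le_iff.2 ⟨by linarith [hs.1], by linarith [ht.1]⟩
  · exact (dist_spinePoint_of_ne hij ht hs).le

lemma floor_div_four_eq {m : ℤ} {z : ℝ} (h₀ : 4 * (m : ℝ) ≤ z) (h₁ : z < 4 * m + 4) :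
    ⌊z / 4⌋ = m :=
  Int.floor_eq_iff.2 ⟨by linarith, by linarith⟩

lemma mem_Ico_floor_div_four (z : ℝ) : z ∈ Ico (4 * (⌊z / 4⌋ : ℝ)) (4 * ⌊z / 4⌋ + 4) :=
  ⟨by linarith [Int.floor_le (z / 4)], by linarith [Int.lt_floor_add_one (z / 4)]⟩

noncomputable def tent (z : ℝ) : ℝ := min (min (z - 4 * ⌊z / 4⌋) (4 * ⌊z / 4⌋ + 4 - z)) 1

lemma tent_eq {m : ℤ} {z : ℝ} (h₀ : 4 * (m : ℝ) ≤ z) (h₁ : z ≤ 4 * m + 4) :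
    tent z = min (min (z - 4 * m) (4 * m + 4 - z)) 1 := by
  rcases h₁.lt_or_eq with h₁ | rfl
  · rw [tent, floor_div_four_eq h₀ h₁]
  · rw [tent, floor_div_four_eq (m := m + 1) (by push_cast; linarith) (by push_cast; linarith)]
    push_cast
    simp only [min_def]; split_ifs <;> linarith

lemma tent_mem_Icc (z : ℝ) : tent z ∈ Icc (0:ℝ) 1 := by
  obtain ⟨h₀, h₁⟩ := mem_Ico_floor_div_four z
  exact ⟨le_min (le_min (by linarith) (by linarith)) zero_le_one, min_le_right _ _⟩

lemma one_le_tent_add_tent_sub_two (z : ℝ) : 1 ≤ tent z + tent (z - 2) := by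
  obtain ⟨h₀, h₁⟩ := mem_Ico_floor_div_four z
  rw [tent_eq h₀ h₁.le]
  rcases le_total z (4 * ⌊z / 4⌋ + 2) with h | h
  · rw [tent_eq (m := ⌊z / 4⌋ - 1) (by push_cast; linarith) (by push_cast; linarith)]
    push_cast
    simp only [min_def]; split_ifs <;> linarith
  · rw [tent_eq (m := ⌊z / 4⌋) (by linarith) (by linarith)]
    simp only [min_def]; split_ifs <;> linarith

lemma tent_sub_tent_sub_two {m : ℤ} {z : ℝ} (h₀ : 4 * (m : ℝ) ≤ z) (h₁ : z ≤ 4 * m + 2) :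
    tent z - tent (z - 2) = z - (4 * m + 1) := by
  rw [tent_eq h₀ (by linarith),
    tent_eq (m := m - 1) (by push_cast; linarith) (by push_cast; linarith)]
  push_cast
  simp only [min_def]; split_ifs <;> linarith

lemma tent_sub_two_sub_tent {m : ℤ} {z : ℝ} (h₀ : 4 * (m : ℝ) + 2 ≤ z) (h₁ : z ≤ 4 * m + 4) :
    tent (z - 2) - tent z = z - (4 * m + 3) := by
  rw [tent_eq (by linarith) h₁, tent_eq (m := m) (by linarith) (by linarith)]
  simp only [min_def]; split_ifs <;> linarith

lemma floor_sub_two_div_four_mem (z : ℝ) : ⌊(z - 2) / 4⌋ ∈ Icc (⌊z / 4⌋ - 1) ⌊z / 4⌋ := by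
  rw [← Int.floor_sub_one]
  exact ⟨Int.floor_le_floor (by linarith), Int.floor_le_floor (by linarith)⟩

lemma min_sub_one_le_tent_add_tent {x y : ℝ} (hxy : x ≤ y) (hA : ⌊x / 4⌋ ≠ ⌊y / 4⌋)
    (hB : ⌊(x - 2) / 4⌋ = ⌊(y - 2) / 4⌋) : min (y - x) 1 ≤ tent x + tent y := by
  obtain ⟨hx₀, hx₁⟩ := mem_Ico_floor_div_four x
  obtain ⟨hy₀, hy₁⟩ := mem_Ico_floor_div_four y
  obtain ⟨hx₂, -⟩ := mem_Ico_floor_div_four (x - 2)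
  obtain ⟨-, hy₃⟩ := mem_Ico_floor_div_four (y - 2)
  obtain ⟨-, hkx⟩ := floor_sub_two_div_four_mem x
  obtain ⟨hky, -⟩ := floor_sub_two_div_four_mem y
  have hmn : ⌊x / 4⌋ < ⌊y / 4⌋ := (Int.floor_le_floor (by linarith)).lt_of_ne hA
  -- `x` and `y` lie within `2` of the boundary `4 * ⌊y / 4⌋` between consecutive blocks
  have hk : ⌊(x - 2) / 4⌋ = ⌊x / 4⌋ := by omega
  have hn : (⌊y / 4⌋ : ℝ) = ⌊x / 4⌋ + 1 := by exact_mod_cast (by omega : ⌊y / 4⌋ = ⌊x / 4⌋ + 1)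
  rw [← hB, hk] at hy₃
  rw [hk] at hx₂
  rw [tent_eq hx₀ hx₁.le, tent_eq hy₀ hy₁.le]
  simp only [min_def]; split_ifs <;> linarith

lemma sub_le_abs_tent_sub_add_abs_tent_sub {x y : ℝ} (hxy : x ≤ y) (hA : ⌊x / 4⌋ = ⌊y / 4⌋)
    (hB : ⌊(x - 2) / 4⌋ = ⌊(y - 2) / 4⌋) :
    y - x ≤ |tent x - tent y| + |tent (x - 2) - tent (y - 2)| := by
  obtain ⟨hx₀, -⟩ := mem_Ico_floor_div_four x
  obtain ⟨-, hy₁⟩ := mem_Ico_floor_div_four y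
  obtain ⟨hx₂, -⟩ := mem_Ico_floor_div_four (x - 2)
  obtain ⟨-, hy₃⟩ := mem_Ico_floor_div_four (y - 2)
  obtain ⟨hk₀, hk₁⟩ := floor_sub_two_div_four_mem x
  rw [← hA] at hy₁
  rw [← hB] at hy₃
  have := le_abs_self (tent x - tent y)
  have := neg_abs_le (tent x - tent y)
  have := le_abs_self (tent (x - 2) - tent (y - 2))
  have := neg_abs_le (tent (x - 2) - tent (y - 2))
  rcases (by omega : ⌊(x - 2) / 4⌋ = ⌊x / 4⌋ - 1 ∨ ⌊(x - 2) / 4⌋ = ⌊x / 4⌋) with hk | hk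
  · rw [hk] at hy₃
    push_cast at hy₃
    have := tent_sub_tent_sub_two hx₀ (by linarith)
    have := tent_sub_tent_sub_two (m := ⌊x / 4⌋) (z := y) (by linarith) (by linarith)
    linarith
  · rw [hk] at hx₂
    have := tent_sub_two_sub_tent (by linarith) (by linarith : x ≤ 4 * ⌊x / 4⌋ + 4)
    have := tent_sub_two_sub_tent (m := ⌊x / 4⌋) (z := y) (by linarith) hy₁.le
    linarith

noncomputable def zigzag (f : ℤ → I) (x : ℝ) : Hedgehog I := spinePoint (f ⌊x / 4⌋) (tent x)

lemma dist_zigzag_of_floor_eq (f : ℤ → I) {x y : ℝ} (h : ⌊x / 4⌋ = ⌊y / 4⌋) :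
    dist (zigzag f x) (zigzag f y) = |tent x - tent y| := by
  rw [zigzag, zigzag, h, dist_spinePoint_same _ (tent_mem_Icc x) (tent_mem_Icc y)]

lemma dist_zigzag_of_floor_ne {f : ℤ → I} (hf : Function.Injective f) {x y : ℝ}
    (h : ⌊x / 4⌋ ≠ ⌊y / 4⌋) : dist (zigzag f x) (zigzag f y) = tent x + tent y :=
  dist_spinePoint_of_ne (hf.ne h) (tent_mem_Icc x) (tent_mem_Icc y)

lemma dist_zigzag_le_of_le (f : ℤ → I) {x y : ℝ} (hxy : x ≤ y) :
    dist (zigzag f x) (zigzag f y) ≤ y - x := by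
  obtain ⟨hx₀, hx₁⟩ := mem_Ico_floor_div_four x
  obtain ⟨hy₀, hy₁⟩ := mem_Ico_floor_div_four y
  by_cases h : ⌊x / 4⌋ = ⌊y / 4⌋
  · rw [dist_zigzag_of_floor_eq f h, tent, tent, h]
    refine (abs_min_sub_min_le_max _ _ _ _).trans (max_le ?_ (by simp [hxy]))
    refine (abs_min_sub_min_le_max _ _ _ _).trans (max_le ?_ ?_) <;>
      rw [abs_le] <;> constructor <;> linarith
  · have hlt : (⌊x / 4⌋ : ℝ) + 1 ≤ ⌊y / 4⌋ := by
      exact_mod_cast (Int.floor_le_floor (by linarith)).lt_of_ne h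
    refine (dist_spinePoint_le_add _ _ (tent_mem_Icc x) (tent_mem_Icc y)).trans ?_
    have : tent x ≤ 4 * ⌊x / 4⌋ + 4 - x := (min_le_left _ _).trans (min_le_right _ _)
    have : tent y ≤ y - 4 * ⌊y / 4⌋ := (min_le_left _ _).trans (min_le_left _ _)
    linarith

noncomputable def realEmbedding (f : ℤ → I) (x : ℝ) : Hedgehog I × Hedgehog I :=
  (zigzag f x, zigzag f (x - 2))

lemma dist_realEmbedding (f : ℤ → I) (x y : ℝ) :
    dist (realEmbedding f x) (realEmbedding f y) =
      max (dist (zigzag f x) (zigzag f y)) (dist (zigzag f (x - 2)) (zigzag f (y - 2))) :=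
  Prod.dist_eq

lemma dist_realEmbedding_le_of_le (f : ℤ → I) {x y : ℝ} (hxy : x ≤ y) :
    dist (realEmbedding f x) (realEmbedding f y) ≤ y - x := by
  rw [dist_realEmbedding]
  refine max_le (dist_zigzag_le_of_le f hxy) ?_
  simpa using dist_zigzag_le_of_le f (sub_le_sub_right hxy 2)

lemma min_sub_one_le_two_mul_dist_realEmbedding {f : ℤ → I} (hf : Function.Injective f)
    {x y : ℝ} (hxy : x ≤ y) :
    min (y - x) 1 ≤ 2 * dist (realEmbedding f x) (realEmbedding f y) := by
  rw [dist_realEmbedding]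
  have h₁ := le_max_left (dist (zigzag f x) (zigzag f y))
    (dist (zigzag f (x - 2)) (zigzag f (y - 2)))
  have h₂ := le_max_right (dist (zigzag f x) (zigzag f y))
    (dist (zigzag f (x - 2)) (zigzag f (y - 2)))
  by_cases hA : ⌊x / 4⌋ = ⌊y / 4⌋ <;> by_cases hB : ⌊(x - 2) / 4⌋ = ⌊(y - 2) / 4⌋
  · linarith [min_le_left (y - x) 1, sub_le_abs_tent_sub_add_abs_tent_sub hxy hA hB,
      dist_zigzag_of_floor_eq f hA, dist_zigzag_of_floor_eq f hB]
  · have hA' : ⌊(x - 2 - 2) / 4⌋ = ⌊(y - 2 - 2) / 4⌋ := by norm_num [sub_sub, sub_div, hA]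
    have := min_sub_one_le_tent_add_tent (by linarith) hB hA'
    rw [sub_sub_sub_cancel_right] at this
    linarith [dist_zigzag_of_floor_ne hf hB, dist_nonneg (x := zigzag f x) (y := zigzag f y)]
  · linarith [min_sub_one_le_tent_add_tent hxy hA hB, dist_zigzag_of_floor_ne hf hA,
      dist_nonneg (x := zigzag f (x - 2)) (y := zigzag f (y - 2))]
  · linarith [min_le_right (y - x) 1, one_le_tent_add_tent_sub_two x,
      one_le_tent_add_tent_sub_two y, dist_zigzag_of_floor_ne hf hA, dist_zigzag_of_floor_ne hf hB]

lemma dist_realEmbedding_le (f : ℤ → I) (x y : ℝ) :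
    dist (realEmbedding f x) (realEmbedding f y) ≤ dist x y := by
  wlog hxy : x ≤ y generalizing x y
  · rw [dist_comm, dist_comm x]
    exact this y x (le_of_not_ge hxy)
  rw [Real.dist_eq, abs_sub_comm, abs_of_nonneg (sub_nonneg.2 hxy)]
  exact dist_realEmbedding_le_of_le f hxy

lemma min_dist_one_le_two_mul_dist_realEmbedding {f : ℤ → I} (hf : Function.Injective f)
    (x y : ℝ) : min (dist x y) 1 ≤ 2 * dist (realEmbedding f x) (realEmbedding f y) := by
  wlog hxy : x ≤ y generalizing x y
  · rw [dist_comm, dist_comm (realEmbedding f x)]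
    exact this y x (le_of_not_ge hxy)
  rw [Real.dist_eq, abs_sub_comm, abs_of_nonneg (sub_nonneg.2 hxy)]
  exact min_sub_one_le_two_mul_dist_realEmbedding hf hxy

lemma isUniformEmbedding_realEmbedding {f : ℤ → I} (hf : Function.Injective f) :
    IsUniformEmbedding (realEmbedding f) := by
  refine Metric.isUniformEmbedding_iff'.2 ⟨fun ε hε => ⟨ε, hε, fun {a b} h =>
    (dist_realEmbedding_le f a b).trans_lt h⟩, fun δ hδ => ⟨min δ 1 / 2, by positivity,
    fun {a b} h => ?_⟩⟩
  by_contra! hab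
  linarith [min_dist_one_le_two_mul_dist_realEmbedding hf a b, min_le_min_right 1 hab]

lemma isClosedEmbedding_realEmbedding {f : ℤ → I} (hf : Function.Injective f) :
    IsClosedEmbedding (realEmbedding f) :=
  (isUniformEmbedding_realEmbedding hf).isClosedEmbedding

end Hedgehog

/-- The real line embeds as a closed subspace of the square `(MJ(ℵ₀))²` of the metric
hedgehog with countably many spines. -/
theorem real_closed_embedding_hedgehog_sq :
    letI : TopologicalSpace (Hedgehog ℕ) := metricHedgehogTop ℕ
    ∃ h : ℝ → Hedgehog ℕ × Hedgehog ℕ, IsEmbedding h ∧ IsClosed (Set.range h) := by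
  obtain ⟨hemb, hclosed⟩ :=
    Hedgehog.isClosedEmbedding_realEmbedding (Encodable.encode_injective (α := ℤ))
  exact ⟨_, hemb, hclosed⟩
end

section
/- The topology of the quotient hedgehog J(κ) is finer than the topology induced by the hedgehog metric on J(κ), and the two topologies coincide if and only if κ < ℵ₀. -/
open Set Topology Cardinal

universe u v

/-! Each spine `t ↦ (t, i)` is an isometric copy of `[0,1]` in `MJ(κ)`, so the quotient map
`[0,1] × I → MJ(κ)` is continuous, which is the comparison of topologies. For finite `κ` the
quotient hedgehog is compact, as a continuous image of `[0,1] × I`, and a continuous bijection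
from a compact space onto a Hausdorff one is a homeomorphism. For infinite `κ` take an unbounded
weight `w : I → ℝ`: the function `(t, i) ↦ t * w i` is continuous on the quotient hedgehog, but
not at `0` in the metric, since the points `(1 / w i, i)` tend to `0` while it takes the value
`1` on them. -/

theorem TopologicalSpace.eq_of_le_of_compactSpace_of_t2Space {X : Type*}
    {t₁ t₂ : TopologicalSpace X} (h₁ : @CompactSpace X t₁) (h₂ : @T2Space X t₂) (h : t₁ ≤ t₂) :
    t₁ = t₂ :=
  le_antisymm h <| continuous_id_iff_le.mp <| @Continuous.continuous_symm_of_equiv_compact_to_t2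
    X X t₁ t₂ h₁ h₂ (Equiv.refl X) (continuous_id_of_le h)

lemma Infinite.exists_not_bddAbove_range (ι : Type*) [Infinite ι] :
    ∃ w : ι → ℝ, ¬ BddAbove (range w) := by
  obtain ⟨f, hf⟩ : ∃ f : ι → ℕ, Function.Surjective f :=
    ⟨_, Function.invFun_surjective (Infinite.natEmbedding ι).injective⟩
  refine ⟨fun i => f i, fun ⟨M, hM⟩ => ?_⟩
  obtain ⟨n, hn⟩ := exists_nat_gt M
  obtain ⟨i, rfl⟩ := hf n
  exact hn.not_ge (hM ⟨i, rfl⟩)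

section

variable {I : Type u}

open Classical in
lemma hedgehogDist_mk (p q : Icc (0:ℝ) 1 × I) :
    hedgehogDist (Quotient.mk _ p : Hedgehog I) (Quotient.mk _ q) =
      if p.2 = q.2 then |(p.1 : ℝ) - q.1| else p.1 + q.1 := by
  have hp : (0:ℝ) ≤ p.1 := p.1.2.1
  have hq : (0:ℝ) ≤ q.1 := q.1.2.1
  unfold hedgehogDist
  rcases Quotient.mk_out (s := hedgehogSetoid I) p with ⟨hp', hp0⟩ | hp' <;>
    rcases Quotient.mk_out (s := hedgehogSetoid I) q with ⟨hq', hq0⟩ | hq' <;>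
    split_ifs <;> simp_all [abs_of_nonneg]

lemma continuous_mk_metricHedgehogTop :
    Continuous[hedgehogBaseTop I, metricHedgehogTop I] (Quotient.mk (hedgehogSetoid I)) := by
  let _ := metricHedgehog I
  let _ : TopologicalSpace I := ⊥
  have : DiscreteTopology I := ⟨rfl⟩
  -- Now `Hedgehog I` also has the quotient topology as an instance, so the metric one is explicit.
  refine (@continuous_prod_of_discrete_right _ _ _ _ _ (metricHedgehogTop I) _ _).mpr
    fun i => Isometry.continuous ?_
  refine Isometry.of_dist_eq fun s t => ?_
  change hedgehogDist _ _ = _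
  rw [hedgehogDist_mk, if_pos rfl, Subtype.dist_eq, Real.dist_eq]

lemma compactSpace_quotHedgehogTop [Finite I] :
    @CompactSpace (Hedgehog I) (quotHedgehogTop I) := by
  let _ : TopologicalSpace I := ⊥
  have : DiscreteTopology I := ⟨rfl⟩
  exact @Function.Surjective.compactSpace (Icc (0:ℝ) 1 × I) _ instTopologicalSpaceProd
    (quotHedgehogTop I) _ continuous_coinduced_rng _ Quotient.mk_surjective

def hedgehogWeightedRadius (w : I → ℝ) : Hedgehog I → ℝ :=
  Quotient.lift (fun p => p.1 * w p.2) (by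
    rintro p q (⟨hp, hq⟩ | rfl)
    · simp [hp, hq]
    · rfl)

lemma continuous_hedgehogWeightedRadius (w : I → ℝ) :
    Continuous[quotHedgehogTop I, _] (hedgehogWeightedRadius w) := by
  let _ : TopologicalSpace I := ⊥
  have : DiscreteTopology I := ⟨rfl⟩
  refine continuous_coinduced_dom.mpr (continuous_prod_of_discrete_right.mpr fun i => ?_)
  exact continuous_subtype_val.mul (continuous_const (y := w i))

lemma not_continuous_hedgehogWeightedRadius {w : I → ℝ} (hw : ¬ BddAbove (range w)) :
    ¬ Continuous[metricHedgehogTop I, _] (hedgehogWeightedRadius w) := by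
  let _ := metricHedgehog I
  intro hcont
  obtain ⟨_, ⟨i₀, -⟩, -⟩ := not_bddAbove_iff.mp hw 0
  let o : Hedgehog I := Quotient.mk _ (⟨0, by norm_num⟩, i₀)
  obtain ⟨δ, hδ, hball⟩ := Metric.continuousAt_iff.mp (hcont.continuousAt (x := o)) 1 one_pos
  obtain ⟨_, ⟨i, rfl⟩, hi⟩ := not_bddAbove_iff.mp hw (max 1 δ⁻¹)
  have hw1 : 1 < w i := (le_max_left _ _).trans_lt hi
  have hwδ : δ⁻¹ < w i := (le_max_right _ _).trans_lt hi
  have hw0 : 0 < w i := one_pos.trans hw1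
  let x : Hedgehog I := Quotient.mk _ (⟨(w i)⁻¹, by positivity, inv_le_one_of_one_le₀ hw1.le⟩, i)
  have hx : dist x o < δ := by
    change hedgehogDist _ _ < δ
    rw [hedgehogDist_mk]
    split_ifs <;> simpa [abs_of_pos hw0] using (inv_lt_comm₀ hδ hw0).mp hwδ
  have := hball hx
  simp [x, o, hedgehogWeightedRadius, hw0.ne'] at this

lemma t2Space_metricHedgehogTop : @T2Space (Hedgehog I) (metricHedgehogTop I) := by
  let _ := metricHedgehog I
  show T2Space (Hedgehog I)
  infer_instance

end

/-- The quotient hedgehog topology is finer than the metric hedgehog topology, and they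
coincide iff `κ < ℵ₀`. -/
theorem quotHedgehogTop_le_metricHedgehogTop (I : Type u) :
    quotHedgehogTop I ≤ metricHedgehogTop I ∧
      (quotHedgehogTop I = metricHedgehogTop I ↔ #I < Cardinal.aleph0) := by
  have hle : quotHedgehogTop I ≤ metricHedgehogTop I :=
    continuous_iff_coinduced_le.mp continuous_mk_metricHedgehogTop
  refine ⟨hle, fun heq => ?_, fun hI => ?_⟩
  · by_contra hI
    have : Infinite I := Cardinal.infinite_iff.mpr (not_lt.mp hI)
    obtain ⟨w, hw⟩ := Infinite.exists_not_bddAbove_range I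
    exact not_continuous_hedgehogWeightedRadius hw (heq ▸ continuous_hedgehogWeightedRadius w)
  · have : Finite I := Cardinal.lt_aleph0_iff_finite.mp hI
    exact TopologicalSpace.eq_of_le_of_compactSpace_of_t2Space compactSpace_quotHedgehogTop
      t2Space_metricHedgehogTop hle
end
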